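/- Let R ≥ 1/2 and fix either sign ±. For every complex-valued f ∈ C^∞([−R,R]) one has the dissipativity estimate Re (L_± f | f)_{L²(𝔹_R, h_±')} ≤ (1/2) ‖f‖²_{L²(𝔹_R, h_±')}. -/

import Mathlib

open Real MeasureTheory

/-- The height function `h(y) = √(2 + y²) − 2`. -/
noncomputable def hfun (y : ℝ) : ℝ := Real.sqrt (2 + y ^ 2) - 2

/-- The vector field `L_± f(y) = −((y ± h(y))/(1 ± h'(y))) f'(y)` acting on
complex-valued functions; the sign is encoded by `σ ∈ {1, −1}`. -/
noncomputable def LopC (σ : ℝ) (f : ℝ → ℂ) : ℝ → ℂ :=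
  fun y => -((((y + σ * hfun y) / (1 + σ * deriv hfun y) : ℝ)) : ℂ) * deriv f y

/-! With `φ(y) = y ± h(y)` the weight `1 ± h'(y) = φ'(y)` is positive (as `|h'| < 1`) and cancels
the denominator of `L_±`, so `Re (L_± f | f) = -½ ∫ φ (|f|²)'`. Integrating by parts gives
`½ ∫ φ' |f|²` minus the boundary term `½ [φ |f|²]_{-R}^{R}`, which is nonnegative: `h` is even and
`|h(R)| ≤ R` for `R ≥ 1/2`, whence `φ(-R) ≤ 0 ≤ φ(R)`. -/

open scoped ComplexConjugate Interval

theorem re_integral_neg_mul_deriv_mul_conj {a b : ℝ} {φ φ' : ℝ → ℝ} {f f' : ℝ → ℂ}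
    (hφ : ∀ y ∈ [[a, b]], HasDerivAt φ (φ' y) y) (hφ' : IntervalIntegrable φ' volume a b)
    (hf : ∀ y ∈ [[a, b]], HasDerivAt f (f' y) y) (hf' : ContinuousOn f' [[a, b]]) :
    (∫ y in a..b, -(φ y : ℂ) * (f' y * conj (f y))).re =
      (∫ y in a..b, ‖f y‖ ^ 2 * φ' y) / 2 - (φ b * ‖f b‖ ^ 2 - φ a * ‖f a‖ ^ 2) / 2 := by
  have hφc : ContinuousOn φ [[a, b]] := fun y hy => (hφ y hy).continuousAt.continuousWithinAt
  have hfc : ContinuousOn f [[a, b]] := fun y hy => (hf y hy).continuousAt.continuousWithinAt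
  have hparts := intervalIntegral.integral_mul_deriv_eq_deriv_mul hφ
    (fun y hy => (hf y hy).norm_sq) hφ'
    (ContinuousOn.intervalIntegrable (by fun_prop))
  have hre : (∫ y in a..b, -(φ y : ℂ) * (f' y * conj (f y))).re =
      -(1 / 2) * ∫ y in a..b, φ y * (2 * inner ℝ (f y) (f' y)) := by
    rw [← intervalIntegral.integral_const_mul, ← RCLike.re_to_complex,
      ← intervalIntegral.intervalIntegral_re (ContinuousOn.intervalIntegrable (by fun_prop))]
    congr 1 with y
    simp only [RCLike.re_to_complex, Complex.inner, Complex.mul_re, Complex.neg_re,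
      Complex.neg_im, Complex.ofReal_re, Complex.ofReal_im, Complex.conj_re, Complex.conj_im,
      neg_zero, zero_mul, sub_zero]
    ring
  rw [hre, hparts]
  simp_rw [mul_comm (φ' _)]
  ring

theorem re_integral_neg_mul_deriv_mul_conj_le {a b : ℝ} {φ φ' : ℝ → ℝ} {f f' : ℝ → ℂ}
    (hφ : ∀ y ∈ [[a, b]], HasDerivAt φ (φ' y) y) (hφ' : IntervalIntegrable φ' volume a b)
    (hf : ∀ y ∈ [[a, b]], HasDerivAt f (f' y) y) (hf' : ContinuousOn f' [[a, b]])
    (ha : φ a ≤ 0) (hb : 0 ≤ φ b) :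
    (∫ y in a..b, -(φ y : ℂ) * (f' y * conj (f y))).re ≤ (∫ y in a..b, ‖f y‖ ^ 2 * φ' y) / 2 := by
  rw [re_integral_neg_mul_deriv_mul_conj hφ hφ' hf hf']
  have : φ a * ‖f a‖ ^ 2 ≤ φ b * ‖f b‖ ^ 2 :=
    (mul_nonpos_of_nonpos_of_nonneg ha (by positivity)).trans (by positivity)
  linarith

theorem hasDerivAt_hfun (y : ℝ) : HasDerivAt hfun (y / √(2 + y ^ 2)) y := by
  have hpos : 0 < 2 + y ^ 2 := by positivity
  have h := (((hasDerivAt_pow 2 y).const_add (2 : ℝ)).sqrt hpos.ne').sub_const (2 : ℝ)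
  refine HasDerivAt.congr_deriv (f := hfun) h ?_
  field_simp
  ring

theorem deriv_hfun : deriv hfun = fun y => y / √(2 + y ^ 2) :=
  funext fun y => (hasDerivAt_hfun y).deriv

theorem continuous_deriv_hfun : Continuous (deriv hfun) := by
  rw [deriv_hfun]
  exact continuous_id.div (by fun_prop) fun y => (Real.sqrt_pos.2 (by positivity)).ne'

theorem abs_deriv_hfun_lt_one (y : ℝ) : |deriv hfun y| < 1 := by
  have hpos : 0 < √(2 + y ^ 2) := Real.sqrt_pos.2 (by positivity)
  rw [deriv_hfun, abs_div, abs_of_pos hpos, div_lt_one hpos, ← Real.sqrt_sq_eq_abs]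
  exact Real.sqrt_lt_sqrt (sq_nonneg y) (by linarith)

theorem one_add_mul_deriv_hfun_pos {σ : ℝ} (hσ : |σ| ≤ 1) (y : ℝ) : 0 < 1 + σ * deriv hfun y := by
  have : |σ * deriv hfun y| < 1 := by
    rw [abs_mul]
    exact (mul_le_of_le_one_left (abs_nonneg _) hσ).trans_lt (abs_deriv_hfun_lt_one y)
  linarith [neg_abs_le (σ * deriv hfun y)]

theorem hfun_neg (y : ℝ) : hfun (-y) = hfun y := by
  simp [hfun]

theorem abs_hfun_le {R : ℝ} (hR : 1 / 2 ≤ R) : |hfun R| ≤ R := by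
  have hsq : √(2 + R ^ 2) ^ 2 = 2 + R ^ 2 := Real.sq_sqrt (by positivity)
  have hs : 0 ≤ √(2 + R ^ 2) := Real.sqrt_nonneg _
  rw [abs_le, hfun]
  constructor <;> nlinarith

theorem LopC_mul_conj_mul {σ : ℝ} (f : ℝ → ℂ) {y : ℝ} (hy : 1 + σ * deriv hfun y ≠ 0) :
    LopC σ f y * conj (f y) * ((1 + σ * deriv hfun y : ℝ) : ℂ) =
      -((y + σ * hfun y : ℝ) : ℂ) * (deriv f y * conj (f y)) := by
  have hw : ((1 + σ * deriv hfun y : ℝ) : ℂ) ≠ 0 := Complex.ofReal_ne_zero.2 hy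
  rw [LopC, Complex.ofReal_div]
  field_simp

theorem dissipativity (R : ℝ) (hR : 1 / 2 ≤ R) (σ : ℝ) (hσ : σ = 1 ∨ σ = -1)
    (f : ℝ → ℂ) (hf : ContDiff ℝ (⊤ : ℕ∞) f) :
    (∫ y in Set.Ioo (-R) R,
        LopC σ f y * (starRingEnd ℂ) (f y) * (((1 + σ * deriv hfun y : ℝ)) : ℂ)).re
      ≤ (1 / 2) * ∫ y in Set.Ioo (-R) R, ‖f y‖ ^ 2 * (1 + σ * deriv hfun y) := by
  have hσ' : |σ| ≤ 1 := by rcases hσ with rfl | rfl <;> simp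
  have hweight := one_add_mul_deriv_hfun_pos hσ'
  have hσh : |σ * hfun R| ≤ R := by
    rw [abs_mul]
    exact (mul_le_of_le_one_left (abs_nonneg _) hσ').trans (abs_hfun_le hR)
  simp_rw [LopC_mul_conj_mul f (hweight _).ne']
  rw [← integral_Ioc_eq_integral_Ioo, ← integral_Ioc_eq_integral_Ioo,
    ← intervalIntegral.integral_of_le (by linarith), ← intervalIntegral.integral_of_le (by linarith),
    one_div_mul_eq_div]
  refine re_integral_neg_mul_deriv_mul_conj_le (fun y _ => ?_) ?_ (fun y _ => ?_) ?_ ?_ ?_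
  · exact (hasDerivAt_id' y).add ((hasDerivAt_hfun y).differentiableAt.hasDerivAt.const_mul σ)
  · exact (continuous_const.add (continuous_const.mul continuous_deriv_hfun)).intervalIntegrable _ _
  · exact (hf.differentiable (by simp) y).hasDerivAt
  · exact (hf.continuous_deriv (by simp)).continuousOn
  · rw [hfun_neg]; linarith [le_abs_self (σ * hfun R)]
  · linarith [neg_abs_le (σ * hfun R)]
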